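/- arXiv:1904.03462 — 2 statements merged into one kernel-verified Lean document; each statement's English description precedes it below -/
import Mathlib

section
/- Let ρ_- > 0, ρ_+ > 0 and u_- > u_+. With ρ_*(γ) = (u_- - u_+ + ρ_-^γ)^{1/γ}, σ_1(γ) = u_+ - ρ_-(u_- - u_+)/(ρ_*(γ) - ρ_-) and σ_2 = u_+, one has lim_{γ→0+} ∫_{σ_1(γ)}^{σ_2} ρ_*(γ) dξ = lim_{γ→0+} ρ_*(γ)(σ_2 - σ_1(γ)) = ρ_-(u_- - u_+) ≠ 0. -/
open Filter Topology MeasureTheory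

/-- The intermediate density of the Aw–Rascle Riemann solution:
`ρ_*(γ) = (u_- - u_+ + ρ_-^γ)^(1/γ)`. -/
noncomputable def rhoStar (ρm um up γ : ℝ) : ℝ := (um - up + ρm ^ γ) ^ (1 / γ)

/-- The 1-shock speed `σ_1(γ) = u_+ - ρ_-(u_- - u_+)/(ρ_*(γ) - ρ_-)`. -/
noncomputable def sigma1 (ρm um up γ : ℝ) : ℝ :=
  up - ρm * (um - up) / (rhoStar ρm um up γ - ρm)

/-!
As `γ → 0+` the base `u_- - u_+ + ρ_-^γ` of `ρ_*(γ)` tends to `u_- - u_+ + 1 > 1`, so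
`ρ_*(γ) → ∞`. Since `σ_2 - σ_1(γ) = ρ_-(u_- - u_+)/(ρ_*(γ) - ρ_-)`, the product
`ρ_*(γ)(σ_2 - σ_1(γ))` is `ρ_-(u_- - u_+) · r/(r - ρ_-)` at `r = ρ_*(γ)`, which tends to
`ρ_-(u_- - u_+)`; the integral of the constant `ρ_*(γ)` is that same product.
-/

lemma tendsto_rpow_one_div_nhdsGT_zero_atTop {f : ℝ → ℝ} {L : ℝ} (hL : 1 < L)
    (hf : Tendsto f (𝓝[>] 0) (𝓝 L)) :
    Tendsto (fun γ => f γ ^ (1 / γ)) (𝓝[>] 0) atTop := by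
  set b := (1 + L) / 2 with hb_def
  have hb : 1 < b := by linarith
  have hb_le : ∀ᶠ γ in 𝓝[>] 0, b ≤ f γ :=
    hf.eventually (eventually_ge_nhds (by linarith))
  have hb_pow : Tendsto (fun γ : ℝ => b ^ (1 / γ)) (𝓝[>] 0) atTop := by
    simpa only [one_div, Function.comp_def] using
      (tendsto_rpow_atTop_of_base_gt_one b hb).comp tendsto_inv_nhdsGT_zero
  refine tendsto_atTop_mono' _ ?_ hb_pow
  filter_upwards [hb_le, self_mem_nhdsWithin] with γ hγ (hγ0 : 0 < γ)
  exact Real.rpow_le_rpow (by linarith) hγ (by positivity)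

lemma tendsto_mul_div_sub_atTop (a c : ℝ) :
    Tendsto (fun r : ℝ => r * (c / (r - a))) atTop (𝓝 c) := by
  have hinv : Tendsto (fun r : ℝ => (r - a)⁻¹) atTop (𝓝 0) :=
    (tendsto_atTop_add_const_right _ (-a) tendsto_id).inv_tendsto_atTop
  have hlim : Tendsto (fun r : ℝ => c + a * c * (r - a)⁻¹) atTop (𝓝 c) := by
    simpa using tendsto_const_nhds.add (hinv.const_mul (a * c))
  refine hlim.congr' ?_
  filter_upwards [eventually_gt_atTop a] with r hr
  have : r - a ≠ 0 := sub_ne_zero.2 hr.ne'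
  field_simp
  ring

lemma rhoStar_tendsto_atTop {ρm um up : ℝ} (hρm : 0 < ρm) (hu : up < um) :
    Tendsto (rhoStar ρm um up) (𝓝[>] 0) atTop := by
  have hbase : Tendsto (fun γ : ℝ => um - up + ρm ^ γ) (𝓝[>] 0) (𝓝 (um - up + 1)) := by
    simpa using ((Real.continuousAt_const_rpow (b := 0) hρm.ne').tendsto.const_add
      (um - up)).mono_left nhdsWithin_le_nhds
  exact tendsto_rpow_one_div_nhdsGT_zero_atTop (by linarith) hbase

theorem stmt2_general (ρm um up : ℝ) (hρm : 0 < ρm) (hu : up < um) :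
    Tendsto (fun γ : ℝ => ∫ _ξ in (sigma1 ρm um up γ)..up, rhoStar ρm um up γ)
      (𝓝[>] 0) (𝓝 (ρm * (um - up))) ∧
    Tendsto (fun γ : ℝ => rhoStar ρm um up γ * (up - sigma1 ρm um up γ))
      (𝓝[>] 0) (𝓝 (ρm * (um - up))) ∧
    ρm * (um - up) ≠ 0 := by
  have hprod : Tendsto (fun γ : ℝ => rhoStar ρm um up γ * (up - sigma1 ρm um up γ))
      (𝓝[>] 0) (𝓝 (ρm * (um - up))) := by
    simpa only [sigma1, sub_sub_cancel, Function.comp_def] using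
      (tendsto_mul_div_sub_atTop ρm (ρm * (um - up))).comp (rhoStar_tendsto_atTop hρm hu)
  refine ⟨hprod.congr fun γ => ?_, hprod, (mul_pos hρm (sub_pos.2 hu)).ne'⟩
  rw [intervalIntegral.integral_const, smul_eq_mul, mul_comm]

/-- For `ρ_- > 0`, `ρ_+ > 0`, `u_- > u_+`:
`lim_{γ→0+} ∫_{σ_1(γ)}^{σ_2} ρ_*(γ) dξ = lim_{γ→0+} ρ_*(γ)(σ_2 - σ_1(γ)) = ρ_-(u_- - u_+) ≠ 0`,
where `σ_2 = u_+`. -/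
theorem stmt2 (ρm ρp um up : ℝ) (hρm : 0 < ρm) (hρp : 0 < ρp) (hu : up < um) :
    Tendsto (fun γ : ℝ => ∫ _ξ in (sigma1 ρm um up γ)..up, rhoStar ρm um up γ)
      (𝓝[>] 0) (𝓝 (ρm * (um - up))) ∧
    Tendsto (fun γ : ℝ => rhoStar ρm um up γ * (up - sigma1 ρm um up γ))
      (𝓝[>] 0) (𝓝 (ρm * (um - up))) ∧
    ρm * (um - up) ≠ 0 :=
  stmt2_general ρm um up hρm hu
end

section
/- For every smooth test function φ : (0,∞) × ℝ → ℝ with compact support, lim_{γ→0+} ∫_0^∞ ∫_ℝ (ρ_γ(x/t) − ρ_0(x/t)) φ(t,x) dx dt = ∫_0^∞ ρ_-(u_- − u_+) · t · φ(t, u_+ t) dt. In other words, as γ → 0 the density of the self-similar Aw–Rascle Riemann solution converges in the sense of distributions on (0,∞)×ℝ to ρ_0(x/t) plus a delta measure supported on the line x = u_+ t with weight w_1(t) = ρ_-(u_- − u_+) t. -/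
open Filter Topology MeasureTheory

/-- The density of the self-similar Aw–Rascle Riemann solution. -/
noncomputable def rhoAR (ρm ρp um up γ ξ : ℝ) : ℝ :=
  if ξ < sigma1 ρm um up γ then ρm else if ξ < up then rhoStar ρm um up γ else ρp

/-- The limiting step density `ρ_0`. -/
noncomputable def rhoZero (ρm ρp up ξ : ℝ) : ℝ := if ξ < up then ρm else ρp



lemma rhoStar_gt {ρm um up : ℝ} (hρm : 0 < ρm) (hu : up < um) {γ : ℝ} (hγ : 0 < γ) :
    ρm < rhoStar ρm um up γ := by
  have h1 : ρm = (ρm ^ γ) ^ (1 / γ) := by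
    rw [← Real.rpow_mul hρm.le, mul_one_div_cancel hγ.ne', Real.rpow_one]
  nth_rewrite 1 [h1]
  exact Real.rpow_lt_rpow (Real.rpow_pos_of_pos hρm γ).le (by linarith [sub_pos.mpr hu])
    (by positivity)

lemma rhoStar_tendsto {ρm um up : ℝ} (hρm : 0 < ρm) (hu : up < um) :
    Tendsto (fun γ => rhoStar ρm um up γ) (𝓝[>] 0) atTop := by
  have hb : ∀ γ : ℝ, 0 < um - up + ρm ^ γ := fun γ =>
    add_pos (sub_pos.mpr hu) (Real.rpow_pos_of_pos hρm γ)
  have heq : ∀ γ : ℝ, rhoStar ρm um up γ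
      = Real.exp (Real.log (um - up + ρm ^ γ) * (1 / γ)) := by
    intro γ; rw [rhoStar, Real.rpow_def_of_pos (hb γ)]
  simp_rw [heq]
  apply Real.tendsto_exp_atTop.comp
  have h1 : Tendsto (fun γ : ℝ => Real.log (um - up + ρm ^ γ)) (𝓝[>] 0)
      (𝓝 (Real.log (um - up + 1))) := by
    have hc : ContinuousAt (fun γ : ℝ => Real.log (um - up + ρm ^ γ)) 0 := by
      have h0 : ContinuousAt (fun γ : ℝ => um - up + ρm ^ γ) 0 :=
        continuousAt_const.add (Real.continuousAt_const_rpow hρm.ne')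
      exact ContinuousAt.comp (x := (0:ℝ)) (Real.continuousAt_log (hb 0).ne') h0
    have := hc.tendsto
    rw [Real.rpow_zero] at this
    exact this.mono_left nhdsWithin_le_nhds
  have h2 : Tendsto (fun γ : ℝ => 1 / γ) (𝓝[>] 0) atTop := by
    simpa [one_div] using tendsto_inv_nhdsGT_zero
  exact h1.pos_mul_atTop (Real.log_pos (by linarith)) h2

lemma sigma1_lt {ρm um up : ℝ} (hρm : 0 < ρm) (hu : up < um) {γ : ℝ} (hγ : 0 < γ) :
    sigma1 ρm um up γ < up := by
  have h := rhoStar_gt hρm hu hγ (up := up) (um := um)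
  have : 0 < ρm * (um - up) / (rhoStar ρm um up γ - ρm) := by
    apply div_pos (by nlinarith [sub_pos.mpr hu]) (by linarith)
  simp only [sigma1]; linarith

lemma sigma1_key {ρm um up : ℝ} (hρm : 0 < ρm) (hu : up < um) {γ : ℝ} (hγ : 0 < γ) :
    (rhoStar ρm um up γ - ρm) * (up - sigma1 ρm um up γ) = ρm * (um - up) := by
  have h := rhoStar_gt hρm hu hγ (up := up) (um := um)
  have hne : rhoStar ρm um up γ - ρm ≠ 0 := by linarith
  simp only [sigma1]
  field_simp
  ring

lemma sigma1_tendsto {ρm um up : ℝ} (hρm : 0 < ρm) (hu : up < um) :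
    Tendsto (fun γ => sigma1 ρm um up γ) (𝓝[>] 0) (𝓝 up) := by
  have h1 : Tendsto (fun γ => rhoStar ρm um up γ - ρm) (𝓝[>] 0) atTop :=
    tendsto_atTop_add_const_right _ (-ρm) (rhoStar_tendsto hρm hu)
  have h2 : Tendsto (fun γ => ρm * (um - up) / (rhoStar ρm um up γ - ρm)) (𝓝[>] 0)
      (𝓝 0) := Tendsto.div_atTop tendsto_const_nhds h1
  simpa [sigma1] using (tendsto_const_nhds (x := up) (f := 𝓝[>] (0:ℝ))).sub h2

lemma inner_eq {ρm ρp um up : ℝ} (hρm : 0 < ρm) (hu : up < um) {γ t : ℝ} (hγ : 0 < γ)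
    (ht : 0 < t) (φ : ℝ × ℝ → ℝ) :
    ∫ x : ℝ, (rhoAR ρm ρp um up γ (x / t) - rhoZero ρm ρp up (x / t)) * φ (t, x)
      = (rhoStar ρm um up γ - ρm) * ∫ x in (sigma1 ρm um up γ * t)..(up * t), φ (t, x) := by
  set σ := sigma1 ρm um up γ with hσdef
  have hσ : σ < up := sigma1_lt hρm hu hγ
  have key : ∀ x : ℝ, (rhoAR ρm ρp um up γ (x / t) - rhoZero ρm ρp up (x / t)) * φ (t, x)
      = Set.indicator (Set.Ico (σ * t) (up * t))
          (fun x => (rhoStar ρm um up γ - ρm) * φ (t, x)) x := by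
    intro x
    by_cases h1 : x < σ * t
    · have hd1 : x / t < σ := (div_lt_iff₀ ht).mpr (by linarith)
      have hd2 : x / t < up := lt_trans hd1 hσ
      have hmem : x ∉ Set.Ico (σ * t) (up * t) := by
        simp only [Set.mem_Ico, not_and, not_lt]; intro h; linarith
      rw [Set.indicator_of_notMem hmem]
      simp [rhoAR, rhoZero, ← hσdef, hd1, hd2]
    · by_cases h2 : x < up * t
      · have hd1 : ¬ (x / t < σ) := by rw [not_lt, le_div_iff₀ ht]; linarith
        have hd2 : x / t < up := (div_lt_iff₀ ht).mpr (by linarith)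
        rw [Set.indicator_of_mem (Set.mem_Ico.mpr ⟨not_lt.mp h1, h2⟩)]
        simp [rhoAR, rhoZero, ← hσdef, hd1, hd2]
      · have hd2 : ¬ (x / t < up) := by rw [not_lt, le_div_iff₀ ht]; linarith
        have hd1 : ¬ (x / t < σ) := fun h => hd2 (lt_trans h hσ)
        have hmem : x ∉ Set.Ico (σ * t) (up * t) := by
          simp only [Set.mem_Ico, not_and, not_lt]; intro h; linarith
        rw [Set.indicator_of_notMem hmem]
        simp [rhoAR, rhoZero, ← hσdef, hd1, hd2]
  have hle : σ * t ≤ up * t := by nlinarith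
  simp_rw [key]
  rw [MeasureTheory.integral_indicator measurableSet_Ico,
    MeasureTheory.integral_Ico_eq_integral_Ioo,
    ← MeasureTheory.integral_Ioc_eq_integral_Ioo,
    ← intervalIntegral.integral_of_le hle,
    intervalIntegral.integral_const_mul]

lemma pointwise_lim {ρm um up : ℝ} (hρm : 0 < ρm) (hu : up < um) {t : ℝ} (ht : 0 < t)
    (φ : ℝ × ℝ → ℝ) (hφ : Continuous φ) :
    Tendsto (fun γ => (rhoStar ρm um up γ - ρm) *
        ∫ x in (sigma1 ρm um up γ * t)..(up * t), φ (t, x)) (𝓝[>] 0)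
      (𝓝 (ρm * (um - up) * t * φ (t, up * t))) := by
  have hcont : Continuous fun x => φ (t, x) := hφ.comp (Continuous.prodMk_right t)
  set a := up * t with ha
  set H : ℝ → ℝ := fun y => ∫ x in (0:ℝ)..y, φ (t, x) with hHdef
  have hderiv : HasDerivAt H (φ (t, a)) a :=
    intervalIntegral.integral_hasDerivAt_right (hcont.intervalIntegrable _ _)
      (hcont.stronglyMeasurableAtFilter _ _) hcont.continuousAt
  have hslope := hasDerivAt_iff_tendsto_slope.mp hderiv
  have hs_tend : Tendsto (fun γ => sigma1 ρm um up γ * t) (𝓝[>] 0) (𝓝[≠] a) := by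
    rw [tendsto_nhdsWithin_iff]
    refine ⟨(sigma1_tendsto hρm hu).mul_const t, ?_⟩
    filter_upwards [self_mem_nhdsWithin] with γ hγ
    have h := sigma1_lt (ρm := ρm) (um := um) (up := up) hρm hu hγ
    have : sigma1 ρm um up γ * t < a := by rw [ha]; nlinarith
    exact ne_of_lt this
  have hcomp : Tendsto (fun γ => slope H a (sigma1 ρm um up γ * t)) (𝓝[>] 0)
      (𝓝 (φ (t, a))) := hslope.comp hs_tend
  have hmain := hcomp.const_mul (ρm * (um - up) * t)
  refine Tendsto.congr' ?_ hmain
  filter_upwards [self_mem_nhdsWithin] with γ hγ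
  set s := sigma1 ρm um up γ * t with hs
  have hσlt : sigma1 ρm um up γ < up := sigma1_lt hρm hu hγ
  have hint : H a - H s = ∫ x in s..a, φ (t, x) :=
    intervalIntegral.integral_interval_sub_left (hcont.intervalIntegrable _ _)
      (hcont.intervalIntegrable _ _)
  have hkey := sigma1_key (ρm := ρm) (um := um) (up := up) hρm hu hγ
  rw [← hint, slope_def_field, ← hkey]
  have hD : (up - sigma1 ρm um up γ) * t ≠ 0 :=
    (mul_pos (by linarith) ht).ne'
  have hsa : s - a = -((up - sigma1 ρm um up γ) * t) := by rw [hs, ha]; ring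
  rw [hsa, div_neg, ← neg_div, neg_sub]
  calc (rhoStar ρm um up γ - ρm) * (up - sigma1 ρm um up γ) * t *
        ((H a - H s) / ((up - sigma1 ρm um up γ) * t))
      = (rhoStar ρm um up γ - ρm) *
        ((H a - H s) / ((up - sigma1 ρm um up γ) * t) * ((up - sigma1 ρm um up γ) * t)) := by
        ring
    _ = (rhoStar ρm um up γ - ρm) * (H a - H s) := by rw [div_mul_cancel₀ _ hD]

/-- For every smooth test function `φ` with compact support contained in `(0,∞) × ℝ`,
`lim_{γ→0+} ∫_0^∞ ∫_ℝ (ρ_γ(x/t) − ρ_0(x/t)) φ(t,x) dx dt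
  = ∫_0^∞ ρ_-(u_- − u_+) · t · φ(t, u_+ t) dt`:
the density converges in the sense of distributions on `(0,∞)×ℝ` to `ρ_0(x/t)` plus
a delta measure on the line `x = u_+ t` with weight `w_1(t) = ρ_-(u_- − u_+) t`. -/
theorem stmt5 (ρm ρp um up : ℝ) (hρm : 0 < ρm) (hρp : 0 < ρp) (hu : up < um)
    (φ : ℝ × ℝ → ℝ) (hφ : ContDiff ℝ (⊤ : ℕ∞) φ) (hφc : HasCompactSupport φ)
    (hφs : tsupport φ ⊆ Set.Ioi 0 ×ˢ (Set.univ : Set ℝ)) :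
    Tendsto (fun γ : ℝ =>
        ∫ t in Set.Ioi (0 : ℝ),
          ∫ x : ℝ, (rhoAR ρm ρp um up γ (x / t) - rhoZero ρm ρp up (x / t)) * φ (t, x))
      (𝓝[>] 0)
      (𝓝 (∫ t in Set.Ioi (0 : ℝ), ρm * (um - up) * t * φ (t, up * t))) := by
  have hφcont : Continuous φ := hφ.continuous
  obtain ⟨C, hC⟩ := hφc.exists_bound_of_continuous hφcont
  have hC0 : 0 ≤ C := le_trans (norm_nonneg _) (hC 0)
  obtain ⟨r, hr⟩ := hφc.isBounded.subset_closedBall 0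
  have hvan : ∀ t x : ℝ, r < t → φ (t, x) = 0 := by
    intro t x h
    by_contra hne
    have hm : (t, x) ∈ tsupport φ := subset_tsupport φ hne
    have h2 := hr hm
    rw [Metric.mem_closedBall, dist_zero_right] at h2
    have h1 : |t| ≤ ‖((t, x) : ℝ × ℝ)‖ := by
      simpa using norm_fst_le ((t, x) : ℝ × ℝ)
    have : t ≤ r := le_trans (le_abs_self t) (le_trans h1 h2)
    linarith
  have hcpos : 0 < ρm * (um - up) := by nlinarith [sub_pos.mpr hu]
  set bound : ℝ → ℝ := Set.indicator (Set.Ioc (0:ℝ) r)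
      (fun _ => C * (ρm * (um - up) * r)) with hbound
  apply MeasureTheory.tendsto_integral_filter_of_dominated_convergence bound
  · -- measurability
    filter_upwards with γ
    have m1 : Measurable fun ξ : ℝ => rhoAR ρm ρp um up γ ξ := by
      unfold rhoAR
      exact Measurable.ite (measurableSet_lt measurable_id measurable_const) measurable_const
        (Measurable.ite (measurableSet_lt measurable_id measurable_const) measurable_const
          measurable_const)
    have m0 : Measurable fun ξ : ℝ => rhoZero ρm ρp up ξ := by
      unfold rhoZero
      exact Measurable.ite (measurableSet_lt measurable_id measurable_const) measurable_const
        measurable_const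
    have m2 : Measurable fun z : ℝ × ℝ => z.2 / z.1 := measurable_snd.div measurable_fst
    have mg : Measurable fun z : ℝ × ℝ =>
        (rhoAR ρm ρp um up γ (z.2 / z.1) - rhoZero ρm ρp up (z.2 / z.1)) * φ z :=
      (((m1.comp m2).sub (m0.comp m2)).mul hφcont.measurable)
    exact mg.aestronglyMeasurable.integral_prod_right'
  · -- bound
    filter_upwards [self_mem_nhdsWithin] with γ hγ
    filter_upwards [ae_restrict_mem measurableSet_Ioi] with t ht
    have ht' : (0:ℝ) < t := ht
    by_cases htr : t ≤ r
    · rw [inner_eq hρm hu hγ ht' φ]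
      have hR : 0 < rhoStar ρm um up γ - ρm := sub_pos.mpr (rhoStar_gt hρm hu hγ)
      have hσ : sigma1 ρm um up γ < up := sigma1_lt hρm hu hγ
      have hb1 : ‖∫ x in (sigma1 ρm um up γ * t)..(up * t), φ (t, x)‖
          ≤ C * |up * t - sigma1 ρm um up γ * t| :=
        intervalIntegral.norm_integral_le_of_norm_le_const (fun x _ => hC _)
      have habs : |up * t - sigma1 ρm um up γ * t| = (up - sigma1 ρm um up γ) * t := by
        rw [abs_of_nonneg (by nlinarith)]; ring
      calc ‖(rhoStar ρm um up γ - ρm) *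
            ∫ x in (sigma1 ρm um up γ * t)..(up * t), φ (t, x)‖
          ≤ |rhoStar ρm um up γ - ρm| * (C * |up * t - sigma1 ρm um up γ * t|) := by
            rw [norm_mul]
            exact mul_le_mul_of_nonneg_left hb1 (abs_nonneg _)
        _ = C * ((rhoStar ρm um up γ - ρm) * (up - sigma1 ρm um up γ) * t) := by
            rw [abs_of_pos hR, habs]; ring
        _ = C * (ρm * (um - up) * t) := by rw [sigma1_key hρm hu hγ]
        _ ≤ C * (ρm * (um - up) * r) := by
            apply mul_le_mul_of_nonneg_left _ hC0
            nlinarith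
        _ = bound t := by rw [hbound, Set.indicator_of_mem (Set.mem_Ioc.mpr ⟨ht', htr⟩)]
    · have hz : ∀ x : ℝ, (rhoAR ρm ρp um up γ (x / t) - rhoZero ρm ρp up (x / t)) * φ (t, x)
          = 0 := fun x => by rw [hvan t x (not_le.mp htr), mul_zero]
      simp only [hz, integral_zero, norm_zero, hbound]
      rw [Set.indicator_of_notMem (fun hmem => htr hmem.2)]
  · -- integrable bound
    have : Integrable bound := by
      rw [hbound, integrable_indicator_iff measurableSet_Ioc]
      exact (integrableOn_const_iff).mpr (Or.inr measure_Ioc_lt_top)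
    exact this.restrict
  · -- pointwise limit
    filter_upwards [ae_restrict_mem measurableSet_Ioi] with t ht
    have ht' : (0:ℝ) < t := ht
    apply Tendsto.congr' ?_ (pointwise_lim hρm hu ht' φ hφcont)
    filter_upwards [self_mem_nhdsWithin] with γ hγ
    exact (inner_eq hρm hu hγ ht' φ).symm
end
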